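/- arXiv:1905.11389 — 2 statements merged into one kernel-verified Lean document; each statement's English description precedes it below -/
import Mathlib

section
/- Let f ∈ S_{p,μ} and α > 0. Then lim_{h→0} ‖Δ_h^α f‖_{p,μ} = 0. -/
open MeasureTheory Filter Topology Asymptotics

noncomputable section

/-- The `k`-th Fourier coefficient of a (2π-periodic) function `f : ℝ → ℂ`:
`f̂(k) = (2π)⁻¹ ∫_0^{2π} f(t) e^{-ikt} dt`. -/
def fcoeff (f : ℝ → ℂ) (k : ℤ) : ℂ :=
  (1 / (2 * (Real.pi : ℂ))) *
    ∫ t in (0:ℝ)..(2 * Real.pi), f t * Complex.exp (-(Complex.I * (k : ℂ) * (t : ℂ)))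

/-- The admissible set defining the Luxemburg norm:
`{a > 0 : Σ_k μ_k |f̂(k)/a|^{p_k} ≤ 1}` (with the sum required to converge). -/
def lpSet (p μ : ℤ → ℝ) (f : ℝ → ℂ) : Set ℝ :=
  {a : ℝ | 0 < a ∧
    Summable (fun k : ℤ => μ k * (‖fcoeff f k‖ / a) ^ (p k)) ∧
    ∑' k : ℤ, μ k * (‖fcoeff f k‖ / a) ^ (p k) ≤ 1}

/-- The Luxemburg norm `‖f‖_{p,μ}`. -/
def luxNorm (p μ : ℤ → ℝ) (f : ℝ → ℂ) : ℝ := sInf (lpSet p μ f)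

/-- Membership in the space `S_{p,μ}`: `f` is 2π-periodic, integrable on a period, and
has finite Luxemburg norm (i.e. the admissible set is nonempty). -/
def MemS (p μ : ℤ → ℝ) (f : ℝ → ℂ) : Prop :=
  Function.Periodic f (2 * Real.pi) ∧ IntervalIntegrable f volume 0 (2 * Real.pi) ∧
    (lpSet p μ f).Nonempty

/-- Generalized binomial coefficient `binom(α,j) = α(α−1)⋯(α−j+1)/j!`. -/
def gbinom (α : ℝ) (j : ℕ) : ℝ :=
  (∏ i ∈ Finset.range j, (α - (i : ℝ))) / (j.factorial : ℝ)

/-- Fractional difference `Δ_h^α f(x) = Σ_{j=0}^∞ (−1)^j binom(α,j) f(x − jh)`. -/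
def fracDiff (α h : ℝ) (f : ℝ → ℂ) (x : ℝ) : ℂ :=
  ∑' j : ℕ, (-1 : ℂ) ^ j * (gbinom α j : ℂ) * f (x - (j : ℝ) * h)

/-- Modulus of smoothness `ω_α(f,δ)_{p,μ} = sup_{|h| ≤ δ} ‖Δ_h^α f‖_{p,μ}`. -/
def modulus (p μ : ℤ → ℝ) (α : ℝ) (f : ℝ → ℂ) (δ : ℝ) : ℝ :=
  ⨆ h : {h : ℝ // |h| ≤ δ}, luxNorm p μ (fracDiff α h.1 f)

/-- Trigonometric polynomial of degree at most `n - 1` with coefficients `c`: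
`Σ_{|k| ≤ n-1} c_k e^{ikx}`. -/
def trigSum (c : ℤ → ℂ) (n : ℕ) (x : ℝ) : ℂ :=
  ∑ k ∈ Finset.Ioo (-(n : ℤ)) (n : ℤ), c k * Complex.exp (Complex.I * (k : ℂ) * (x : ℂ))

/-- Best approximation `E_n(f)_{p,μ}` of `f` by trigonometric polynomials of degree `≤ n-1`. -/
def bestApprox (p μ : ℤ → ℝ) (n : ℕ) (f : ℝ → ℂ) : ℝ :=
  sInf {r : ℝ | ∃ c : ℤ → ℂ, r = luxNorm p μ (fun x => f x - trigSum c n x)}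

/-- `g` is the ψ-derivative of `f`: `ĝ(k) = f̂(k)/ψ_k` for `k ≠ 0` (and `ĝ(0) = 0`),
with `g` 2π-periodic and integrable on a period. -/
def IsPsiDeriv (ψ : ℤ → ℂ) (f g : ℝ → ℂ) : Prop :=
  Function.Periodic g (2 * Real.pi) ∧ IntervalIntegrable g volume 0 (2 * Real.pi) ∧
    fcoeff g 0 = 0 ∧ ∀ k : ℤ, k ≠ 0 → fcoeff g k = fcoeff f k / ψ k

/-- Trigonometric polynomial of degree at most `n`: `τ_n(x) = Σ_{|k| ≤ n} c_k e^{ikx}`. -/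
def trigPoly (c : ℤ → ℂ) (n : ℕ) (x : ℝ) : ℂ :=
  ∑ k ∈ Finset.Icc (-(n : ℤ)) (n : ℤ), c k * Complex.exp (Complex.I * (k : ℂ) * (x : ℂ))

/-- ψ-derivative of the trigonometric polynomial with coefficients `c`:
`τ_n^ψ(x) = Σ_{0<|k|≤n} (c_k/ψ_k) e^{ikx}`. -/
def trigPolyPsi (ψ : ℤ → ℂ) (c : ℤ → ℂ) (n : ℕ) (x : ℝ) : ℂ :=
  ∑ k ∈ Finset.Icc (-(n : ℤ)) (n : ℤ),
    (if k = 0 then 0 else c k / ψ k) * Complex.exp (Complex.I * (k : ℂ) * (x : ℂ))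


/-!
On Fourier coefficients, `Δ_h^α` acts as the multiplier
`m_h(k) = Σ_j (-1)^j binom(α,j) e^{-ikjh}`. For `α > 0` the binomial coefficients are absolutely
summable, so `|m_h(k)| ≤ M := Σ_j |binom(α,j)|` uniformly, and `m_h(k) → m_0(k) = Σ_j (-1)^j binom(α,j)`,
which vanishes by Abel's theorem applied to `(1 - x)^α = Σ_j (-1)^j binom(α,j) x^j`. Since the
exponents `p_k` are bounded, the modular of `Δ_h^α f / ε` is dominated by a multiple of the modular
of `f / a` for an admissible `a`, and dominated convergence for series makes it tend to `0`.
-/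

theorem gbinom_eq_choose (α : ℝ) (j : ℕ) : gbinom α j = Ring.choose α j := by
  rw [Ring.choose_eq_smul, ← Polynomial.aeval_eq_smeval, Polynomial.aeval_def,
    Polynomial.eval₂_eq_eval_map, descPochhammer_map, descPochhammer_eval_eq_prod_range, gbinom,
    smul_eq_mul, div_eq_inv_mul]

theorem gbinom_succ (α : ℝ) (j : ℕ) : gbinom α (j + 1) = gbinom α j * (α - j) / (j + 1) := by
  rw [gbinom, gbinom, Finset.prod_range_succ, Nat.factorial_succ]
  push_cast
  field_simp

theorem succ_mul_abs_gbinom_succ {α : ℝ} {j : ℕ} (hj : α ≤ j) :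
    (j + 1) * |gbinom α (j + 1)| = (j - α) * |gbinom α j| := by
  rw [gbinom_succ, abs_div, abs_mul, abs_of_nonpos (sub_nonpos.2 hj),
    abs_of_pos (by positivity : (0 : ℝ) < j + 1)]
  field_simp
  ring

theorem summable_abs_gbinom {α : ℝ} (hα : 0 < α) : Summable fun j => |gbinom α j| := by
  set m := ⌈α⌉₊
  set c : ℕ → ℝ := fun j => j * |gbinom α j|
  -- Beyond `α` the weights `j |binom(α,j)|` decrease, and `α |binom(α,j)|` is their decrement.
  have htelescope : ∀ i, α * |gbinom α (i + m)| = c (i + m) - c (i + 1 + m) := fun i => by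
    have := succ_mul_abs_gbinom_succ ((Nat.le_ceil α).trans (by simp : (m : ℝ) ≤ ↑(i + m)))
    simp only [c, add_right_comm i 1 m]
    push_cast at this ⊢
    linarith
  have hc : ∀ j, 0 ≤ c j := fun j => by positivity
  rw [← summable_nat_add_iff m]
  refine summable_of_sum_range_le (c := c m / α) (fun _ => abs_nonneg _) fun n => ?_
  rw [le_div_iff₀ hα, Finset.sum_mul]
  simp_rw [mul_comm _ α, htelescope]
  rw [Finset.sum_range_sub' (fun i => c (i + m)), zero_add]
  linarith [hc (n + m)]

theorem hasSum_gbinom_mul_pow (α : ℝ) {x : ℝ} (hx : |x| < 1) :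
    HasSum (fun j : ℕ => gbinom α j * x ^ j) ((1 + x) ^ α) := by
  have h := (Real.one_add_rpow_hasFPowerSeriesOnBall_zero (a := α)).hasSum (y := x)
    (by simpa [enorm_eq_nnnorm, ← NNReal.coe_lt_one] using hx)
  simpa [binomialSeries, FormalMultilinearSeries.ofScalars_apply_eq, gbinom_eq_choose, mul_comm]
    using h

theorem tsum_neg_one_pow_mul_gbinom {α : ℝ} (hα : 0 < α) :
    ∑' j : ℕ, (-1) ^ j * gbinom α j = 0 := by
  have hs : Summable fun j : ℕ => (-1) ^ j * gbinom α j :=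
    .of_norm <| (summable_abs_gbinom hα).congr fun j => by simp
  have habel := Real.tendsto_tsum_powerSeries_nhdsWithin_lt hs.hasSum.tendsto_sum_nat
  have hclosed : ∀ᶠ x in 𝓝[<] (1 : ℝ), ∑' j : ℕ, (-1) ^ j * gbinom α j * x ^ j = (1 - x) ^ α := by
    filter_upwards [Ioo_mem_nhdsLT (show (0 : ℝ) < 1 by norm_num)] with x hx
    rw [sub_eq_add_neg, ← (hasSum_gbinom_mul_pow α (x := -x)
      (by rw [abs_neg, abs_lt]; constructor <;> linarith [hx.1, hx.2])).tsum_eq]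
    congr 1 with j
    rw [neg_pow]
    ring
  have hzero : Tendsto (fun x : ℝ => (1 - x) ^ α) (𝓝[<] 1) (𝓝 0) := by
    have := ((tendsto_const_nhds (x := (1 : ℝ))).sub (tendsto_id (x := 𝓝 1))).rpow_const
      (p := α) (Or.inr hα.le)
    rw [sub_self, Real.zero_rpow hα.ne'] at this
    exact this.mono_left nhdsWithin_le_nhds
  exact tendsto_nhds_unique (habel.congr' hclosed) hzero

section Symbol

/-- `(1 - e^{-ikh})^α`, expanded by the binomial series. -/
def fracDiffSymbol (α : ℝ) (k : ℤ) (h : ℝ) : ℂ :=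
  ∑' j : ℕ, (-1) ^ j * (gbinom α j : ℂ) * Complex.exp (-(Complex.I * k * ((j * h : ℝ) : ℂ)))

theorem norm_exp_neg_I_mul (k : ℤ) (x : ℝ) :
    ‖Complex.exp (-(Complex.I * k * x))‖ = 1 := by
  rw [Complex.norm_exp]
  simp

theorem norm_fracDiffSymbol_term (α : ℝ) (k : ℤ) (j : ℕ) (x : ℝ) :
    ‖(-1) ^ j * (gbinom α j : ℂ) * Complex.exp (-(Complex.I * k * x))‖ = |gbinom α j| := by
  simp [norm_exp_neg_I_mul]

variable {α : ℝ} (hα : 0 < α) (k : ℤ)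
include hα

theorem norm_fracDiffSymbol_le (h : ℝ) : ‖fracDiffSymbol α k h‖ ≤ ∑' j : ℕ, |gbinom α j| := by
  refine (norm_tsum_le_tsum_norm ?_).trans_eq (tsum_congr fun j => norm_fracDiffSymbol_term ..)
  exact (summable_abs_gbinom hα).congr fun j => (norm_fracDiffSymbol_term ..).symm

theorem tendsto_fracDiffSymbol_zero : Tendsto (fracDiffSymbol α k) (𝓝 0) (𝓝 0) := by
  have hcont : Continuous (fracDiffSymbol α k) :=
    continuous_tsum (fun j => by fun_prop) (summable_abs_gbinom hα)
      fun j h => (norm_fracDiffSymbol_term ..).le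
  have hzero : fracDiffSymbol α k 0 = 0 := by
    simp only [fracDiffSymbol, mul_zero, Complex.ofReal_zero, neg_zero, Complex.exp_zero, mul_one]
    exact_mod_cast tsum_neg_one_pow_mul_gbinom hα
  simpa [hzero] using hcont.tendsto 0

end Symbol

theorem Function.Periodic.intervalIntegral_comp_sub_eq {E : Type*} [NormedAddCommGroup E]
    [NormedSpace ℝ E] {g : ℝ → E} {T : ℝ} (hg : Function.Periodic g T) (s : ℝ) :
    ∫ t in (0 : ℝ)..T, g (t - s) = ∫ t in (0 : ℝ)..T, g t := by
  rw [intervalIntegral.integral_comp_sub_right, show T - s = (0 - s) + T by ring,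
    hg.intervalIntegral_add_eq (0 - s) 0, zero_add]

theorem intervalIntegral_tsum_of_summable_integral_norm {E : Type*} [NormedAddCommGroup E]
    [NormedSpace ℝ E] {a b : ℝ} (hab : a ≤ b) {F : ℕ → ℝ → E}
    (hF : ∀ j, IntervalIntegrable (F j) volume a b)
    (hsum : Summable fun j => ∫ t in a..b, ‖F j t‖) :
    ∫ t in a..b, ∑' j, F j t = ∑' j, ∫ t in a..b, F j t := by
  simp only [intervalIntegral.integral_of_le hab] at hsum ⊢
  exact (integral_tsum_of_summable_integral_norm
    (fun j => (intervalIntegrable_iff_integrableOn_Ioc_of_le hab).1 (hF j)) hsum).symm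

theorem fcoeff_const_mul (c : ℂ) (g : ℝ → ℂ) (k : ℤ) :
    fcoeff (fun t => c * g t) k = c * fcoeff g k := by
  simp only [fcoeff, mul_assoc, intervalIntegral.integral_const_mul]
  ring

theorem fcoeff_comp_sub {f : ℝ → ℂ} (hf : Function.Periodic f (2 * Real.pi)) (s : ℝ) (k : ℤ) :
    fcoeff (fun t => f (t - s)) k = Complex.exp (-(Complex.I * k * s)) * fcoeff f k := by
  set G : ℝ → ℂ := fun t => f t * Complex.exp (-(Complex.I * k * t))
  have hG : Function.Periodic G (2 * Real.pi) := fun t => by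
    simp only [G, hf t]
    rw [show -(Complex.I * k * ↑(t + 2 * Real.pi)) =
        -(Complex.I * k * t) + (-k : ℤ) * (2 * Real.pi * Complex.I) by push_cast; ring,
      Complex.exp_add, Complex.exp_int_mul_two_pi_mul_I, mul_one]
  have hshift : ∀ t : ℝ, f (t - s) * Complex.exp (-(Complex.I * k * t)) =
      Complex.exp (-(Complex.I * k * s)) * G (t - s) := fun t => by
    simp only [G, mul_left_comm (Complex.exp _), ← Complex.exp_add]
    push_cast
    ring_nf
  simp only [fcoeff, hshift, intervalIntegral.integral_const_mul, hG.intervalIntegral_comp_sub_eq]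
  ring

theorem fcoeff_tsum {F : ℕ → ℝ → ℂ} (hF : ∀ j, IntervalIntegrable (F j) volume 0 (2 * Real.pi))
    (hsum : Summable fun j => ∫ t in (0 : ℝ)..2 * Real.pi, ‖F j t‖) (k : ℤ) :
    fcoeff (fun t => ∑' j, F j t) k = ∑' j, fcoeff (F j) k := by
  have hexp : Continuous fun t : ℝ => Complex.exp (-(Complex.I * k * t)) := by fun_prop
  simp only [fcoeff, ← tsum_mul_right, tsum_mul_left]
  congr 1
  refine intervalIntegral_tsum_of_summable_integral_norm Real.two_pi_pos.le
    (fun j => (hF j).mul_continuousOn hexp.continuousOn) (hsum.congr fun j => ?_)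
  simp [norm_exp_neg_I_mul]

theorem fcoeff_fracDiff {α : ℝ} (hα : 0 < α) {f : ℝ → ℂ}
    (hper : Function.Periodic f (2 * Real.pi))
    (hint : IntervalIntegrable f volume 0 (2 * Real.pi)) (h : ℝ) (k : ℤ) :
    fcoeff (fracDiff α h f) k = fracDiffSymbol α k h * fcoeff f k := by
  have hint' : ∀ s, IntervalIntegrable (fun t => f (t - s)) volume 0 (2 * Real.pi) := fun s => by
    simpa using (hper.intervalIntegrable₀ Real.two_pi_pos.ne' hint (0 - s) (2 * Real.pi - s))
      |>.comp_sub_right s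
  have hnorm : ∀ j : ℕ, ∫ t in (0 : ℝ)..2 * Real.pi, ‖(-1) ^ j * (gbinom α j : ℂ) * f (t - j * h)‖
      = |gbinom α j| * ∫ t in (0 : ℝ)..2 * Real.pi, ‖f t‖ := fun j => by
    simp only [norm_mul, norm_pow, norm_neg, norm_one, one_pow, one_mul, Complex.norm_real,
      Real.norm_eq_abs, intervalIntegral.integral_const_mul]
    rw [(show Function.Periodic (‖f ·‖) (2 * Real.pi) from fun t => by simp only [hper t])
      |>.intervalIntegral_comp_sub_eq]
  unfold fracDiff
  rw [fcoeff_tsum (fun j => (hint' _).const_mul _)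
    (((summable_abs_gbinom hα).mul_right _).congr fun j => (hnorm j).symm), fracDiffSymbol,
    ← tsum_mul_right]
  simp only [fcoeff_const_mul, fcoeff_comp_sub hper]
  exact tsum_congr fun j => by ring

section Luxemburg

theorem Real.rpow_le_rpow_mul_of_le_mul {x y C q K : ℝ} (hx : 0 ≤ x) (hy : 0 ≤ y)
    (hxy : x ≤ C * y) (hC : 1 ≤ C) (hq : 0 ≤ q) (hqK : q ≤ K) : x ^ q ≤ C ^ K * y ^ q :=
  calc x ^ q ≤ (C * y) ^ q := Real.rpow_le_rpow hx hxy hq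
    _ = C ^ q * y ^ q := Real.mul_rpow (by linarith) hy
    _ ≤ C ^ K * y ^ q := by gcongr

variable {p μ : ℤ → ℝ}

theorem luxNorm_nonneg (f : ℝ → ℂ) : 0 ≤ luxNorm p μ f :=
  Real.sInf_nonneg fun _ ha => ha.1.le

theorem luxNorm_le_of_mem_lpSet {f : ℝ → ℂ} {a : ℝ} (ha : a ∈ lpSet p μ f) : luxNorm p μ f ≤ a :=
  csInf_le ⟨0, fun _ hb => hb.1.le⟩ ha

variable {K : ℝ} (hp : ∀ k, 0 < p k) (hpK : ∀ k, p k ≤ K) (hμ : ∀ k, 0 ≤ μ k)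
  {ι : Type*} {l : Filter ι} {g : ι → ℝ → ℂ} {f : ℝ → ℂ} {M : ℝ}
  (hf : (lpSet p μ f).Nonempty) (hbound : ∀ i k, ‖fcoeff (g i) k‖ ≤ M * ‖fcoeff f k‖)
  (hlim : ∀ k, Tendsto (fun i => fcoeff (g i) k) l (𝓝 0))
include hp hpK hμ hf hbound hlim

theorem eventually_mem_lpSet_of_fcoeff {ε : ℝ} (hε : 0 < ε) : ∀ᶠ i in l, ε ∈ lpSet p μ (g i) := by
  obtain ⟨a, ha, hsum, -⟩ := hf
  set C := max 1 (M * a / ε)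
  set F : ι → ℤ → ℝ := fun i k => μ k * (‖fcoeff (g i) k‖ / ε) ^ p k
  have hF : ∀ i k, 0 ≤ F i k := fun i k => mul_nonneg (hμ k) (by positivity)
  have hdom : ∀ i k, F i k ≤ C ^ K * (μ k * (‖fcoeff f k‖ / a) ^ p k) := fun i k => by
    rw [mul_left_comm]
    refine mul_le_mul_of_nonneg_left (Real.rpow_le_rpow_mul_of_le_mul (by positivity)
      (by positivity) ?_ (le_max_left _ _) (hp k).le (hpK k)) (hμ k)
    calc ‖fcoeff (g i) k‖ / ε ≤ M * ‖fcoeff f k‖ / ε := by gcongr; exact hbound i k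
      _ = M * a / ε * (‖fcoeff f k‖ / a) := by field_simp
      _ ≤ C * (‖fcoeff f k‖ / a) := by gcongr; exact le_max_right _ _
  have hFlim : ∀ k, Tendsto (fun i => F i k) l (𝓝 0) := fun k => by
    simpa [Real.zero_rpow (hp k).ne'] using
      ((((hlim k).norm.div_const ε).rpow_const (Or.inr (hp k).le)).const_mul (μ k))
  have hmodular : Tendsto (fun i => ∑' k, F i k) l (𝓝 0) := by
    simpa using tendsto_tsum_of_dominated_convergence (hsum.mul_left (C ^ K)) hFlim
      (.of_forall fun i k => (Real.norm_of_nonneg (hF i k)).trans_le (hdom i k))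
  filter_upwards [hmodular.eventually (eventually_le_nhds one_pos)] with i hi
  exact ⟨hε, .of_nonneg_of_le (hF i) (hdom i) (hsum.mul_left _), hi⟩

theorem tendsto_luxNorm_zero_of_fcoeff : Tendsto (fun i => luxNorm p μ (g i)) l (𝓝 0) := by
  refine tendsto_order.2 ⟨fun b hb => .of_forall fun i => hb.trans_le (luxNorm_nonneg _),
    fun ε hε => ?_⟩
  filter_upwards [eventually_mem_lpSet_of_fcoeff hp hpK hμ hf hbound hlim (half_pos hε)] with i hi
  exact (luxNorm_le_of_mem_lpSet hi).trans_lt (half_lt_self hε)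

end Luxemburg

/-- `lim_{h→0} ‖Δ_h^α f‖_{p,μ} = 0`. -/
theorem stmt_3 (K : ℝ) (p μ : ℤ → ℝ) (hp : ∀ k : ℤ, 1 ≤ p k ∧ p k ≤ K)
    (hμ : ∀ k : ℤ, 0 ≤ μ k) (f : ℝ → ℂ) (hf : MemS p μ f)
    (α : ℝ) (hα : 0 < α) :
    Tendsto (fun h : ℝ => luxNorm p μ (fracDiff α h f)) (𝓝 0) (𝓝 0) := by
  obtain ⟨hper, hint, hne⟩ := hf
  refine tendsto_luxNorm_zero_of_fcoeff (fun k => one_pos.trans_le (hp k).1) (fun k => (hp k).2)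
    hμ hne (M := ∑' j : ℕ, |gbinom α j|) (fun h k => ?_) fun k => ?_
  · rw [fcoeff_fracDiff hα hper hint, norm_mul]
    gcongr
    exact norm_fracDiffSymbol_le hα k h
  · simp_rw [fcoeff_fracDiff hα hper hint]
    simpa using (tendsto_fracDiffSymbol_zero hα k).mul_const (fcoeff f k)
end
end

section
/- Let ψ = {ψ_k}_{k∈ℤ} be a sequence of complex numbers such that |ψ_{−k}| = |ψ_k| ≥ |ψ_{k+1}| > 0 for all k ≥ 0. Then for every trigonometric polynomial τ_n of degree at most n, n ∈ ℕ, one has ‖τ_n^ψ‖_{p,μ} ≤ (1/|ψ_n|) ‖τ_n‖_{p,μ}. In particular, for ψ_k = |k|^{−r} with r > 0 (so that τ_n^ψ = τ_n^{(r)}), ‖τ_n^{(r)}‖_{p,μ} ≤ n^r ‖τ_n‖_{p,μ}. -/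
/-! Everything is read off Fourier coefficients. The coefficients of `τ_n^ψ` are `c_k / ψ_k`
for `0 < |k| ≤ n` and vanish otherwise, so monotonicity and symmetry of `|ψ|` bound them in
modulus by `|c_k| / |ψ_n|`. The Luxemburg norm is monotone in the moduli of the coefficients
and positively homogeneous (if `a` is admissible for `f`, then `C a` is admissible for any `g`
with `|ĝ(k)| ≤ C |f̂(k)|`), which gives the first bound; the second is the case
`ψ_k = |k|^{-r}`, where `1/|ψ_k| = |k|^r ≤ n^r`. -/

open MeasureTheory Filter Topology Asymptotics

noncomputable section

lemma integral_exp_int_mul_I (m : ℤ) :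
    ∫ t in (0:ℝ)..(2 * Real.pi), Complex.exp (Complex.I * m * t) =
      if m = 0 then (2 * Real.pi : ℂ) else 0 := by
  split_ifs with hm
  · simp [hm]
  have hIm : Complex.I * m ≠ 0 := mul_ne_zero Complex.I_ne_zero (Int.cast_ne_zero.2 hm)
  have hperiod : Complex.exp (Complex.I * m * (2 * Real.pi : ℝ)) = 1 := by
    rw [← Complex.exp_int_mul_two_pi_mul_I m]
    push_cast
    ring_nf
  rw [integral_exp_mul_complex hIm, hperiod]
  simp

lemma fcoeff_sum_exp (s : Finset ℤ) (c : ℤ → ℂ) (k : ℤ) :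
    fcoeff (fun x => ∑ m ∈ s, c m * Complex.exp (Complex.I * m * x)) k =
      if k ∈ s then c k else 0 := by
  have hπ : (2 * Real.pi : ℂ) ≠ 0 := by exact_mod_cast Real.two_pi_pos.ne'
  have hterm : ∀ m ∈ s, (1 / (2 * (Real.pi : ℂ))) * ∫ t in (0:ℝ)..(2 * Real.pi),
      c m * Complex.exp (Complex.I * m * t) * Complex.exp (-(Complex.I * k * t)) =
        if k = m then c m else 0 := by
    intro m _
    have hprod : ∀ t : ℝ, c m * Complex.exp (Complex.I * m * t) *
        Complex.exp (-(Complex.I * k * t)) = c m * Complex.exp (Complex.I * ↑(m - k) * t) := by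
      intro t
      rw [mul_assoc, ← Complex.exp_add]
      push_cast
      ring_nf
    simp_rw [hprod, intervalIntegral.integral_const_mul, integral_exp_int_mul_I, sub_eq_zero,
      eq_comm (a := m)]
    split_ifs
    · field_simp
    · simp
  unfold fcoeff
  simp_rw [Finset.sum_mul]
  rw [intervalIntegral.integral_finsetSum fun m _ => by
      apply Continuous.intervalIntegrable; fun_prop,
    Finset.mul_sum, Finset.sum_congr rfl hterm, Finset.sum_ite_eq]

lemma fcoeff_trigPoly (c : ℤ → ℂ) (n : ℕ) (k : ℤ) :
    fcoeff (trigPoly c n) k = if k ∈ Finset.Icc (-(n : ℤ)) n then c k else 0 :=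
  fcoeff_sum_exp _ c k

lemma fcoeff_trigPolyPsi (ψ c : ℤ → ℂ) (n : ℕ) (k : ℤ) :
    fcoeff (trigPolyPsi ψ c n) k =
      if k ∈ Finset.Icc (-(n : ℤ)) n ∧ k ≠ 0 then c k / ψ k else 0 := by
  unfold trigPolyPsi
  rw [fcoeff_sum_exp]
  by_cases hk : k = 0 <;> simp [hk]

section Luxemburg

variable {p μ : ℤ → ℝ}

lemma lpSet_nonempty_of_fcoeff_eq_zero (hp : ∀ k, 1 ≤ p k) (hμ : ∀ k, 0 ≤ μ k) {f : ℝ → ℂ}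
    (s : Finset ℤ) (hs : ∀ k ∉ s, fcoeff f k = 0) : (lpSet p μ f).Nonempty := by
  set a : ℝ := 1 + ∑ k ∈ s, ‖fcoeff f k‖ + ∑ k ∈ s, μ k * ‖fcoeff f k‖
  have hsum₁ : 0 ≤ ∑ k ∈ s, ‖fcoeff f k‖ := by positivity
  have hsum₂ : 0 ≤ ∑ k ∈ s, μ k * ‖fcoeff f k‖ :=
    Finset.sum_nonneg fun k _ => mul_nonneg (hμ k) (norm_nonneg _)
  have ha : 0 < a := by positivity
  have hcoeff_le : ∀ k, ‖fcoeff f k‖ / a ≤ 1 := by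
    intro k
    rw [div_le_one ha]
    by_cases hk : k ∈ s
    · linarith [Finset.single_le_sum (fun j _ => norm_nonneg (fcoeff f j)) hk]
    · rw [hs k hk, norm_zero]
      exact ha.le
  have hzero : ∀ k ∉ s, μ k * (‖fcoeff f k‖ / a) ^ p k = 0 := by
    intro k hk
    rw [hs k hk, norm_zero, zero_div, Real.zero_rpow (by linarith [hp k]), mul_zero]
  refine ⟨a, ha, summable_of_ne_finset_zero hzero, ?_⟩
  rw [tsum_eq_sum hzero]
  calc ∑ k ∈ s, μ k * (‖fcoeff f k‖ / a) ^ p k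
      ≤ ∑ k ∈ s, μ k * (‖fcoeff f k‖ / a) :=
        Finset.sum_le_sum fun k _ => mul_le_mul_of_nonneg_left
          (Real.rpow_le_self_of_le_one (by positivity) (hcoeff_le k) (hp k)) (hμ k)
    _ = (∑ k ∈ s, μ k * ‖fcoeff f k‖) / a := by
        rw [Finset.sum_div]
        simp_rw [mul_div_assoc]
    _ ≤ 1 := by
        rw [div_le_one ha]
        linarith

lemma mul_mem_lpSet_of_norm_fcoeff_le (hp : ∀ k, 0 ≤ p k) (hμ : ∀ k, 0 ≤ μ k)
    {f g : ℝ → ℂ} {C : ℝ} (hC : 0 < C) (hfg : ∀ k, ‖fcoeff g k‖ ≤ C * ‖fcoeff f k‖)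
    {a : ℝ} (ha : a ∈ lpSet p μ f) : C * a ∈ lpSet p μ g := by
  obtain ⟨ha, hsum, hle⟩ := ha
  have hCa : 0 < C * a := mul_pos hC ha
  have hterm : ∀ k, μ k * (‖fcoeff g k‖ / (C * a)) ^ p k ≤ μ k * (‖fcoeff f k‖ / a) ^ p k := by
    intro k
    refine mul_le_mul_of_nonneg_left (Real.rpow_le_rpow (by positivity) ?_ (hp k)) (hμ k)
    rw [div_le_div_iff₀ hCa ha]
    nlinarith [hfg k]
  have hsumg : Summable fun k => μ k * (‖fcoeff g k‖ / (C * a)) ^ p k :=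
    hsum.of_nonneg_of_le (fun k => mul_nonneg (hμ k) (by positivity)) hterm
  exact ⟨hCa, hsumg, (hsumg.tsum_le_tsum hterm hsum).trans hle⟩

lemma luxNorm_le_mul_of_norm_fcoeff_le (hp : ∀ k, 0 ≤ p k) (hμ : ∀ k, 0 ≤ μ k)
    {f g : ℝ → ℂ} {C : ℝ} (hC : 0 < C) (hfg : ∀ k, ‖fcoeff g k‖ ≤ C * ‖fcoeff f k‖)
    (hf : (lpSet p μ f).Nonempty) : luxNorm p μ g ≤ C * luxNorm p μ f := by
  rw [luxNorm, luxNorm, ← smul_eq_mul, ← Real.sInf_smul_of_nonneg hC.le]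
  refine csInf_le_csInf ⟨0, fun a ha => ha.1.le⟩ hf.smul_set ?_
  rintro _ ⟨a, ha, rfl⟩
  exact mul_mem_lpSet_of_norm_fcoeff_le hp hμ hC hfg ha

lemma luxNorm_trigPolyPsi_le (hp : ∀ k, 1 ≤ p k) (hμ : ∀ k, 0 ≤ μ k) {ψ c : ℤ → ℂ} {n : ℕ}
    {C : ℝ} (hC : 0 < C) (hψ : ∀ k ∈ Finset.Icc (-(n : ℤ)) n, k ≠ 0 → ‖ψ k‖⁻¹ ≤ C) :
    luxNorm p μ (trigPolyPsi ψ c n) ≤ C * luxNorm p μ (trigPoly c n) := by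
  refine luxNorm_le_mul_of_norm_fcoeff_le (fun k => zero_le_one.trans (hp k)) hμ hC
    (fun k => ?_) (lpSet_nonempty_of_fcoeff_eq_zero hp hμ (Finset.Icc (-(n : ℤ)) n)
      fun k hk => ?_)
  · rw [fcoeff_trigPolyPsi, fcoeff_trigPoly]
    split_ifs with hk hk'
    · rw [norm_div, div_eq_inv_mul]
      exact mul_le_mul_of_nonneg_right (hψ k hk.1 hk.2) (norm_nonneg _)
    · exact absurd hk.1 hk'
    all_goals rw [norm_zero]; positivity
  · rw [fcoeff_trigPoly, if_neg hk]

end Luxemburg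

lemma norm_le_norm_of_natAbs_le {ψ : ℤ → ℂ} (hsymm : ∀ k : ℕ, ‖ψ (-(k : ℤ))‖ = ‖ψ k‖)
    (hanti : ∀ k : ℕ, ‖ψ ((k : ℤ) + 1)‖ ≤ ‖ψ k‖) {n : ℕ} {k : ℤ} (hk : k.natAbs ≤ n) :
    ‖ψ n‖ ≤ ‖ψ k‖ := by
  have hmono : Antitone fun k : ℕ => ‖ψ k‖ := antitone_nat_of_succ_le fun k => by
    simpa using hanti k
  rcases Int.natAbs_eq k with hk' | hk'
  · rw [hk']
    exact hmono hk
  · rw [hk', hsymm]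
    exact hmono hk

lemma inv_norm_abs_rpow_neg_le {r : ℝ} (hr : 0 ≤ r) {n : ℕ} {k : ℤ} (hk0 : k ≠ 0)
    (hkn : |k| ≤ n) : ‖((|(k : ℝ)| ^ (-r) : ℝ) : ℂ)‖⁻¹ ≤ (n : ℝ) ^ r := by
  have hk : (1 : ℝ) ≤ |(k : ℝ)| := by exact_mod_cast Int.one_le_abs hk0
  rw [Complex.norm_real, Real.norm_of_nonneg (by positivity), Real.rpow_neg (by positivity),
    inv_inv]
  exact Real.rpow_le_rpow (by positivity) (by exact_mod_cast hkn) hr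

/-- if `|ψ_{−k}| = |ψ_k| ≥ |ψ_{k+1}| > 0` for all `k ≥ 0`, then
`‖τ_n^ψ‖_{p,μ} ≤ (1/|ψ_n|) ‖τ_n‖_{p,μ}`; in particular, for `ψ_k = |k|^{−r}` (`r > 0`),
`‖τ_n^{(r)}‖_{p,μ} ≤ n^r ‖τ_n‖_{p,μ}`. -/
theorem stmt_13 (K : ℝ) (p μ : ℤ → ℝ) (hp : ∀ k : ℤ, 1 ≤ p k ∧ p k ≤ K)
    (hμ : ∀ k : ℤ, 0 ≤ μ k) (n : ℕ) (hn : 0 < n) (c : ℤ → ℂ) (ψ : ℤ → ℂ)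
    (hψ : ∀ k : ℕ, ‖ψ (-(k : ℤ))‖ = ‖ψ (k : ℤ)‖ ∧
      ‖ψ ((k : ℤ) + 1)‖ ≤ ‖ψ (k : ℤ)‖ ∧
      0 < ‖ψ ((k : ℤ) + 1)‖) :
    luxNorm p μ (trigPolyPsi ψ c n) ≤
        (1 / ‖ψ (n : ℤ)‖) * luxNorm p μ (trigPoly c n) ∧
      ∀ r : ℝ, 0 < r →
        luxNorm p μ (trigPolyPsi (fun k : ℤ => ((|(k : ℝ)| ^ (-r) : ℝ) : ℂ)) c n) ≤
          (n : ℝ) ^ r * luxNorm p μ (trigPoly c n) := by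
  have hp₁ : ∀ k, 1 ≤ p k := fun k => (hp k).1
  have hψn : 0 < ‖ψ n‖ := by
    obtain ⟨m, rfl⟩ := Nat.exists_eq_add_one_of_ne_zero hn.ne'
    exact_mod_cast (hψ m).2.2
  refine ⟨luxNorm_trigPolyPsi_le hp₁ hμ (by positivity) fun k hk _ => ?_,
    fun r hr => luxNorm_trigPolyPsi_le hp₁ hμ (by positivity) fun k hk hk0 => ?_⟩
  · have hkn : k.natAbs ≤ n := by
      rw [Finset.mem_Icc] at hk
      omega
    rw [one_div]
    exact inv_anti₀ hψn
      (norm_le_norm_of_natAbs_le (fun k => (hψ k).1) (fun k => (hψ k).2.1) hkn)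
  · exact inv_norm_abs_rpow_neg_le hr.le hk0 (abs_le.2 (Finset.mem_Icc.1 hk))
end
end
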